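/- arXiv:1308.4364 — 9 statements merged into one kernel-verified Lean document; each statement's English description precedes it below -/
import Mathlib

section
/- Let (·,·)₀ be a symmetric bilinear form on real polynomials and [·,·]₁ a symmetric bilinear form satisfying [t·f(t), g(t)]₁ = [f(t), t·g(t)]₁ = (f,g)₀ for all polynomials f, g. If {Pₙ} is a sequence of monic polynomials with deg Pₙ = n orthogonal with respect to (·,·)₀, and Pₙ* is a monic polynomial of degree n orthogonal to all polynomials of degree < n with respect to [·,·]₁, then for n ≥ 1 there exists a real number Aₙ such that Pₙ*(t) = Pₙ(t) + Aₙ Pₙ₋₁(t). -/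
open Polynomial

private lemma deg_drop {p : Polynomial ℝ} {d : ℕ} (h1 : p.natDegree ≤ d)
    (h2 : p.coeff d = 0) : p = 0 ∨ p.natDegree < d := by
  by_cases hp : p = 0
  · exact Or.inl hp
  · right
    rcases lt_or_eq_of_le h1 with h | h
    · exact h
    · exfalso
      apply hp
      rw [← Polynomial.leadingCoeff_eq_zero, Polynomial.leadingCoeff, h]
      exact h2

private lemma lin_zero (L : Polynomial ℝ →ₗ[ℝ] ℝ) (d : ℕ)
    (h : ∀ k ≤ d, L (X ^ k) = 0) (q : Polynomial ℝ) (hq : q.natDegree ≤ d) :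
    L q = 0 := by
  rw [Polynomial.as_sum_range' q (d + 1) (Nat.lt_succ_of_le hq), map_sum]
  refine Finset.sum_eq_zero fun i hi => ?_
  have : (Polynomial.monomial i (q.coeff i) : Polynomial ℝ) = q.coeff i • X ^ i := by
    rw [Polynomial.smul_X_eq_monomial]
  rw [this, map_smul, h i (Nat.lt_succ_iff.mp (Finset.mem_range.mp hi)), smul_zero]

private lemma orth_low (B0 : LinearMap.BilinForm ℝ (Polynomial ℝ))
    (P : ℕ → Polynomial ℝ)
    (hmonic : ∀ n, (P n).Monic) (hdeg : ∀ n, (P n).natDegree = n)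
    (horth : ∀ n m, n ≠ m → B0 (P n) (P m) = 0)
    (m : ℕ) : ∀ d, d < m → ∀ q : Polynomial ℝ, q.natDegree ≤ d → B0 (P m) q = 0 := by
  intro d
  induction d using Nat.strong_induction_on with
  | _ d ih =>
    intro hdm q hq
    set c := q.coeff d with hc
    have hPd : (P d).coeff d = 1 := by
      have := (hmonic d).leadingCoeff
      rwa [Polynomial.leadingCoeff, hdeg d] at this
    have hr : (q - c • P d).coeff d = 0 := by
      simp [hPd, hc]
    have hrd : (q - c • P d).natDegree ≤ d := by
      have h2 : (c • P d).natDegree ≤ d := by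
        simpa [hdeg d] using Polynomial.natDegree_smul_le c (P d)
      simpa using Polynomial.natDegree_sub_le_of_le hq h2
    have hzero : B0 (P m) (q - c • P d) = 0 := by
      rcases deg_drop hrd hr with h0 | hlt
      · rw [h0, map_zero]
      · exact ih (q - c • P d).natDegree hlt (lt_trans hlt hdm) _ le_rfl
    have : B0 (P m) q = B0 (P m) (q - c • P d) + c * B0 (P m) (P d) := by
      rw [← smul_eq_mul, ← map_smul, ← map_add]
      ring_nf
    rw [this, hzero, horth m d (Nat.ne_of_gt hdm), mul_zero, add_zero]

/-- If `Pₙ*` is a monic degree-`n` polynomial orthogonal to all lower degrees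
with respect to the Geronimus transform `[·,·]₁` of `(·,·)₀`, then `Pₙ* = Pₙ + Aₙ Pₙ₋₁`. -/
theorem geronimus_transformed_poly_repr
    (B0 B1 : LinearMap.BilinForm ℝ (Polynomial ℝ))
    (hB0symm : ∀ f g, B0 f g = B0 g f)
    (hB0pos : ∀ f : Polynomial ℝ, f ≠ 0 → 0 < B0 f f)
    (hB1symm : ∀ f g, B1 f g = B1 g f)
    (hint : ∀ f g : Polynomial ℝ, B1 (X * f) g = B0 f g ∧ B1 f (X * g) = B0 f g)
    (P : ℕ → Polynomial ℝ)
    (hmonic : ∀ n, (P n).Monic) (hdeg : ∀ n, (P n).natDegree = n)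
    (horth : ∀ n m, n ≠ m → B0 (P n) (P m) = 0)
    (n : ℕ) (hn : 1 ≤ n)
    (Pstar : Polynomial ℝ) (hPsm : Pstar.Monic) (hPsd : Pstar.natDegree = n)
    (hPso : ∀ k < n, B1 Pstar (X ^ k) = 0) :
    ∃ A : ℝ, Pstar = P n + A • P (n - 1) := by
  -- Q = Pstar - P n has natDegree ≤ n - 1
  set Q : Polynomial ℝ := Pstar - P n with hQdef
  have hPnc : (P n).coeff n = 1 := by
    have := (hmonic n).leadingCoeff
    rwa [Polynomial.leadingCoeff, hdeg n] at this
  have hPsc : Pstar.coeff n = 1 := by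
    have := hPsm.leadingCoeff
    rwa [Polynomial.leadingCoeff, hPsd] at this
  have hQn : Q.natDegree ≤ n - 1 := by
    have h1 : Q.natDegree ≤ n := by
      simpa using Polynomial.natDegree_sub_le_of_le hPsd.le (hdeg n).le
    have h2 : Q.coeff n = 0 := by simp [hQdef, hPsc, hPnc]
    rcases deg_drop h1 h2 with h0 | hlt
    · simp [h0]
    · omega
  -- denominator
  have hPn1ne : P (n - 1) ≠ 0 := (hmonic (n - 1)).ne_zero
  have hden : 0 < B0 (P (n - 1)) (P (n - 1)) := hB0pos _ hPn1ne
  refine ⟨B0 (P (n - 1)) Q / B0 (P (n - 1)) (P (n - 1)), ?_⟩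
  set A : ℝ := B0 (P (n - 1)) Q / B0 (P (n - 1)) (P (n - 1)) with hA
  set R : Polynomial ℝ := Q - A • P (n - 1) with hRdef
  -- B0 Pstar (X^k) = 0 for k + 1 < n
  have hB0Ps : ∀ k, k + 1 < n → B0 Pstar ((X : Polynomial ℝ) ^ k) = 0 := by
    intro k hk
    have h1 := (hint Pstar ((X : Polynomial ℝ) ^ k)).2
    have h2 : (X : Polynomial ℝ) * X ^ k = X ^ (k + 1) := by ring
    rw [h2] at h1
    rw [← h1]
    exact hPso (k + 1) hk
  -- B0 R (X^k) = 0 for k + 1 < n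
  have hRlowmono : ∀ k, k + 1 < n → B0 R ((X : Polynomial ℝ) ^ k) = 0 := by
    intro k hk
    have h1 : B0 R ((X : Polynomial ℝ) ^ k)
        = B0 Pstar (X ^ k) - B0 (P n) (X ^ k) - A * B0 (P (n - 1)) (X ^ k) := by
      simp only [hRdef, hQdef, map_sub, map_smul, LinearMap.sub_apply, LinearMap.smul_apply, smul_eq_mul]
    have h2 : B0 (P n) ((X : Polynomial ℝ) ^ k) = 0 :=
      orth_low B0 P hmonic hdeg horth n k (by omega) _ (by simp [Polynomial.natDegree_X_pow])
    have h3 : B0 (P (n - 1)) ((X : Polynomial ℝ) ^ k) = 0 :=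
      orth_low B0 P hmonic hdeg horth (n - 1) k (by omega) _
        (by simp [Polynomial.natDegree_X_pow])
    rw [h1, hB0Ps k hk, h2, h3, mul_zero, sub_zero, sub_zero]
  -- B0 R (P (n-1)) = 0 by choice of A
  have hRP : B0 R (P (n - 1)) = 0 := by
    have : B0 R (P (n - 1))
        = B0 Q (P (n - 1)) - A * B0 (P (n - 1)) (P (n - 1)) := by
      simp only [hRdef, map_sub, map_smul, LinearMap.sub_apply, LinearMap.smul_apply, smul_eq_mul]
    rw [this, hA, hB0symm (P (n - 1)) Q]
    field_simp
    simp
  -- B0 R (X^(n-1)) = 0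
  have hRtop : B0 R ((X : Polynomial ℝ) ^ (n - 1)) = 0 := by
    set s : Polynomial ℝ := (X : Polynomial ℝ) ^ (n - 1) - P (n - 1) with hsdef
    have hs1 : s.natDegree ≤ n - 1 := by
      simpa using Polynomial.natDegree_sub_le_of_le
        (le_of_eq (Polynomial.natDegree_X_pow (n - 1))) (hdeg (n - 1)).le
    have hPn1c : (P (n - 1)).coeff (n - 1) = 1 := by
      have := (hmonic (n - 1)).leadingCoeff
      rwa [Polynomial.leadingCoeff, hdeg (n - 1)] at this
    have hs2 : s.coeff (n - 1) = 0 := by simp [hsdef, hPn1c]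
    have hBs : B0 R s = 0 := by
      rcases deg_drop hs1 hs2 with h0 | hlt
      · rw [h0, map_zero]
      · exact lin_zero (B0 R) s.natDegree
          (fun k hk => hRlowmono k (by omega)) s le_rfl
    have : (X : Polynomial ℝ) ^ (n - 1) = s + P (n - 1) := by rw [hsdef]; ring
    rw [this, map_add, hBs, hRP, add_zero]
  -- hence B0 R q = 0 for natDegree q ≤ n - 1
  have hRall : ∀ q : Polynomial ℝ, q.natDegree ≤ n - 1 → B0 R q = 0 := by
    intro q hq
    refine lin_zero (B0 R) (n - 1) (fun k hk => ?_) q hq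
    rcases lt_or_eq_of_le hk with h | h
    · exact hRlowmono k (by omega)
    · rw [h]; exact hRtop
  -- R has natDegree ≤ n - 1
  have hRdeg : R.natDegree ≤ n - 1 := by
    have h2 : (A • P (n - 1)).natDegree ≤ n - 1 := by
      simpa [hdeg (n - 1)] using Polynomial.natDegree_smul_le A (P (n - 1))
    simpa using Polynomial.natDegree_sub_le_of_le hQn h2
  -- R = 0
  have hR0 : R = 0 := by
    by_contra h
    have := hB0pos R h
    rw [hRall R hRdeg] at this
    exact lt_irrefl 0 this
  have h2 : Pstar - P n - A • P (n - 1) = 0 := hR0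
  rw [sub_sub, sub_eq_zero] at h2
  exact h2
end

section
/- With the hypotheses of the Geronimus transformation (positive definite (·,·)₀ with monic orthogonal polynomials {Pₙ}, and regular transformed form [·,·]₁ with [tf,g]₁ = [f,tg]₁ = (f,g)₀, and associated second-kind polynomials Qₙ(x) = ∫ (Pₙ(t)−Pₙ(x))/(t−x) dμ(t) where (f,g)₀ = ∫ f g dμ), let s₀* = [1,1]₁. If Pₙ* = Pₙ + AₙPₙ₋₁ is the monic orthogonal polynomial of degree n ≥ 1 with respect to [·,·]₁, then s₀* Pₙ₋₁(0) + Qₙ₋₁(0) ≠ 0 and Aₙ = −(s₀* Pₙ(0) + Qₙ(0)) / (s₀* Pₙ₋₁(0) + Qₙ₋₁(0)). -/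
open Polynomial MeasureTheory

private lemma vanish_of_vanish_monomials (L : Polynomial ℝ →ₗ[ℝ] ℝ) (K : ℕ)
    (h : ∀ k < K, L (X ^ k) = 0) (f : Polynomial ℝ) (hf : f.degree < (K : WithBot ℕ)) :
    L f = 0 := by
  rcases eq_or_ne f 0 with rfl | hf0
  · simp
  · have hnd : f.natDegree < K := (Polynomial.natDegree_lt_iff_degree_lt hf0).2 hf
    rw [Polynomial.as_sum_range' f K hnd, map_sum]
    refine Finset.sum_eq_zero fun i hi => ?_
    have : (monomial i (f.coeff i) : Polynomial ℝ) = f.coeff i • X ^ i := by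
      rw [Polynomial.smul_eq_C_mul, Polynomial.C_mul_X_pow_eq_monomial]
    rw [this, _root_.map_smul, smul_eq_mul, h i (Finset.mem_range.mp hi), mul_zero]


/-- Formula for the coefficient `Aₙ` in the Geronimus transform
`Pₙ* = Pₙ + Aₙ Pₙ₋₁`, in terms of `s₀* = [1,1]₁` and the second-kind polynomials `Qₙ`. -/
theorem geronimus_coefficient_formula
    (μ μ₁ : Measure ℝ)
    (hμmom : ∀ n : ℕ, Integrable (fun t => t ^ n) μ)
    (hμ₁mom : ∀ n : ℕ, Integrable (fun t => t ^ n) μ₁)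
    (hrel : ∀ f : Polynomial ℝ, ∫ t, f.eval t ∂μ = ∫ t, t * f.eval t ∂μ₁)
    (B0 B1 : LinearMap.BilinForm ℝ (Polynomial ℝ))
    (hB0 : ∀ f g : Polynomial ℝ, B0 f g = ∫ t, f.eval t * g.eval t ∂μ)
    (hB0pos : ∀ f : Polynomial ℝ, f ≠ 0 → 0 < B0 f f)
    (hB1symm : ∀ f g, B1 f g = B1 g f)
    (hint : ∀ f g : Polynomial ℝ, B1 (X * f) g = B0 f g ∧ B1 f (X * g) = B0 f g)
    (P : ℕ → Polynomial ℝ)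
    (hmonic : ∀ n, (P n).Monic) (hdeg : ∀ n, (P n).natDegree = n)
    (horth : ∀ n m, n ≠ m → B0 (P n) (P m) = 0)
    (Q : ℕ → Polynomial ℝ)
    (hQ : ∀ (n : ℕ) (x : ℝ),
      (Q n).eval x = ∫ t, ((P n - C ((P n).eval x)) /ₘ (X - C x)).eval t ∂μ)
    (s0 : ℝ) (hs0 : s0 = B1 1 1)
    (n : ℕ) (hn : 1 ≤ n) (A : ℝ)
    (horthstar : ∀ k < n, B1 (P n + A • P (n - 1)) (X ^ k) = 0) :
    s0 * (P (n - 1)).eval 0 + (Q (n - 1)).eval 0 ≠ 0 ∧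
      A = -(s0 * (P n).eval 0 + (Q n).eval 0) /
          (s0 * (P (n - 1)).eval 0 + (Q (n - 1)).eval 0) := by
  have hmn : n - 1 + 1 = n := by omega
  have hQ0 : ∀ j : ℕ, (Q j).eval 0 = ∫ t, ((P j - C ((P j).eval 0)) /ₘ X).eval t ∂μ := by
    intro j
    have h := hQ j 0
    simpa only [C_0, sub_zero] using h
  -- B0 kills polynomials of degree < j against P j
  have key : ∀ k : ℕ, ∀ f : Polynomial ℝ, f.degree < (k : WithBot ℕ) → ∀ j, k ≤ j →
      B0 f (P j) = 0 := by
    intro k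
    induction k with
    | zero =>
      intro f hf j _
      have hfz : f = 0 := by
        rw [← Polynomial.degree_eq_bot]
        exact Nat.WithBot.lt_zero_iff.mp (by exact_mod_cast hf)
      simp [hfz]
    | succ k ih =>
      intro f hf j hj
      have hgdeg : (f - f.coeff k • P k).degree < (k : WithBot ℕ) := by
        rw [Polynomial.degree_lt_iff_coeff_zero]
        intro i hi
        rw [Polynomial.coeff_sub, Polynomial.coeff_smul, smul_eq_mul]
        rcases eq_or_lt_of_le hi with hik | hik
        · have h1 : (P k).coeff k = 1 := by
            have := (hmonic k).coeff_natDegree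
            rwa [hdeg k] at this
          rw [← hik, h1, mul_one, sub_self]
        · have h1 : f.coeff i = 0 :=
            (Polynomial.degree_lt_iff_coeff_zero f (k+1)).mp (by exact_mod_cast hf) i hik
          have h2 : (P k).coeff i = 0 :=
            Polynomial.coeff_eq_zero_of_natDegree_lt (by rw [hdeg k]; exact hik)
          rw [h1, h2, mul_zero, sub_zero]
      have hrw : f = (f - f.coeff k • P k) + f.coeff k • P k := by rw [sub_add_cancel]
      rw [hrw, map_add, LinearMap.add_apply, _root_.map_smul, LinearMap.smul_apply,
        smul_eq_mul, ih _ hgdeg j (by omega), horth k j (by omega), mul_zero, add_zero]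
  -- B0 is symmetric
  have hB0symm : ∀ f g, B0 f g = B0 g f := by
    intro f g; rw [hB0, hB0]; simp_rw [mul_comm]
  have hPdeg : ∀ j : ℕ, (P j).degree = (j : WithBot ℕ) := by
    intro j
    rw [Polynomial.degree_eq_natDegree (hmonic j).ne_zero, hdeg j]
  -- the key formula B1 (P j) 1 = s0 * P j (0) + Q j (0)
  have hform : ∀ j : ℕ, B1 (P j) 1 = s0 * (P j).eval 0 + (Q j).eval 0 := by
    intro j
    set g := (P j - C ((P j).eval 0)) /ₘ X with hg
    have hsplit : P j = ((P j).eval 0) • (1 : Polynomial ℝ) + X * g := by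
      have h1 : (P j - C ((P j).eval 0)) %ₘ X = 0 := by
        rw [Polynomial.modByMonic_X]
        simp
      have h2 := Polynomial.modByMonic_add_div (P j - C ((P j).eval 0))
        (X : Polynomial ℝ)
      rw [h1, zero_add] at h2
      rw [Polynomial.smul_eq_C_mul, mul_one, ← hg] at *
      rw [h2]
      ring
    calc B1 (P j) 1 = B1 (((P j).eval 0) • (1:Polynomial ℝ) + X * g) 1 := by
          rw [← hsplit]
      _ = (P j).eval 0 * B1 1 1 + B0 g 1 := by
          rw [map_add, LinearMap.add_apply, _root_.map_smul, LinearMap.smul_apply,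
            smul_eq_mul, (hint g 1).1]
      _ = s0 * (P j).eval 0 + (Q j).eval 0 := by
          rw [hs0, hB0, hQ0 j, mul_comm]
          simp [hg]
  -- expansion of the orthogonality at k = 0
  have heq : (s0 * (P n).eval 0 + (Q n).eval 0)
      + A * (s0 * (P (n-1)).eval 0 + (Q (n-1)).eval 0) = 0 := by
    have h0 := horthstar 0 (by omega)
    rw [pow_zero] at h0
    rw [map_add, LinearMap.add_apply, _root_.map_smul, LinearMap.smul_apply, smul_eq_mul,
      hform n, hform (n-1)] at h0
    exact h0
  have hDne : s0 * (P (n-1)).eval 0 + (Q (n-1)).eval 0 ≠ 0 := by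
    intro hD0
    -- then B1 (P (n-1)) kills all monomials X^k with k < n
    have hO : ∀ k < n, B1 (P (n-1)) (X ^ k) = 0 := by
      intro k hk
      cases k with
      | zero => rw [pow_zero, hform (n-1), hD0]
      | succ j =>
        rw [hB1symm, pow_succ']
        rw [(hint (X ^ j) (P (n-1))).1]
        refine key (n-1) (X^j) ?_ (n-1) le_rfl
        rw [Polynomial.degree_X_pow]
        exact_mod_cast (by omega : j < n - 1)
    have hvan : B1 (P n + A • P (n-1)) (P (n-1)) = 0 := by
      refine vanish_of_vanish_monomials (B1 (P n + A • P (n-1))) n horthstar (P (n-1)) ?_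
      rw [hPdeg]
      exact_mod_cast (by omega : n - 1 < n)
    have hXpow : ∀ j : ℕ, B0 (P j) (X ^ j) = B0 (P j) (P j) := by
      intro j
      have hx : (X ^ j : Polynomial ℝ) = P j + (X ^ j - P j) := by ring
      rw [hx, map_add]
      have h0 : B0 (P j) (X ^ j - P j) = 0 := by
        rw [hB0symm]
        refine key j _ ?_ j le_rfl
        have := Polynomial.degree_sub_lt (p := (X:Polynomial ℝ) ^ j) (q := P j)
          (by rw [Polynomial.degree_X_pow, hPdeg]) (pow_ne_zero _ Polynomial.X_ne_zero)
          (by rw [Polynomial.leadingCoeff_X_pow, (hmonic j).leadingCoeff])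
        rwa [Polynomial.degree_X_pow] at this
      rw [h0, add_zero]
    have hXn : B1 (P (n-1)) (X ^ n) = B0 (P (n-1)) (P (n-1)) := by
      have hxx : (X:Polynomial ℝ) ^ n = X * X ^ (n-1) := by
        conv_lhs => rw [← hmn]
        rw [pow_succ']
      rw [hxx, (hint (P (n-1)) (X ^ (n-1))).2, hXpow]
    have hpos : 0 < B1 (P (n-1)) (P n + A • P (n-1)) := by
      have hdecomp : P n + A • P (n-1) = X ^ n + (P n - X ^ n + A • P (n-1)) := by ring
      have hrest : B1 (P (n-1)) (P n - X ^ n + A • P (n-1)) = 0 := by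
        refine vanish_of_vanish_monomials (B1 (P (n-1))) n hO _ ?_
        have hd1 : (P n - X ^ n).degree < (n : WithBot ℕ) := by
          have := Polynomial.degree_sub_lt (p := P n) (q := (X:Polynomial ℝ) ^ n)
            (by rw [Polynomial.degree_X_pow, hPdeg]) (hmonic n).ne_zero
            (by rw [Polynomial.leadingCoeff_X_pow, (hmonic n).leadingCoeff])
          rwa [hPdeg] at this
        have hd2 : (A • P (n-1)).degree < (n : WithBot ℕ) := by
          refine lt_of_le_of_lt (Polynomial.degree_smul_le _ _) ?_
          rw [hPdeg]
          exact_mod_cast (by omega : n - 1 < n)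
        exact lt_of_le_of_lt (Polynomial.degree_add_le _ _) (max_lt hd1 hd2)
      rw [hdecomp, map_add, hXn, hrest, add_zero]
      exact hB0pos _ (hmonic (n-1)).ne_zero
    rw [hB1symm, hvan] at hpos
    exact lt_irrefl 0 hpos
  refine ⟨hDne, ?_⟩
  rw [eq_div_iff hDne]
  linarith [heq]
end

section
/- Let [·,·]₁ be a positive definite symmetric bilinear form on real polynomials satisfying [tf, g]₁ = [f, tg]₁ = (f,g)₀, and let Pₙ* = Pₙ + AₙPₙ₋₁ be the corresponding monic orthogonal polynomials with norms (hₙ*)² = [Pₙ*, Pₙ*]₁. Then (hₙ₊₁*)² = Aₙ₊₁ hₙ² for all n ≥ 0, where hₙ² = (Pₙ, Pₙ)₀; in particular Aₙ₊₁ > 0. -/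
open Polynomial

/-- For the Geronimus transform, `(hₙ₊₁*)² = Aₙ₊₁ hₙ²`, and in
particular `Aₙ₊₁ > 0`. -/
theorem geronimus_norm_relation
    (B0 B1 : LinearMap.BilinForm ℝ (Polynomial ℝ))
    (hB0symm : ∀ f g, B0 f g = B0 g f)
    (hB0pos : ∀ f : Polynomial ℝ, f ≠ 0 → 0 < B0 f f)
    (hB1symm : ∀ f g, B1 f g = B1 g f)
    (hB1pos : ∀ f : Polynomial ℝ, f ≠ 0 → 0 < B1 f f)
    (hint : ∀ f g : Polynomial ℝ, B1 (X * f) g = B0 f g ∧ B1 f (X * g) = B0 f g)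
    (P : ℕ → Polynomial ℝ)
    (hmonic : ∀ n, (P n).Monic) (hdeg : ∀ n, (P n).natDegree = n)
    (horth : ∀ n m, n ≠ m → B0 (P n) (P m) = 0)
    (A : ℕ → ℝ)
    (Pstar : ℕ → Polynomial ℝ)
    (hPs0 : Pstar 0 = P 0)
    (hPs : ∀ n, 1 ≤ n → Pstar n = P n + A n • P (n - 1))
    (hPsorth : ∀ n, ∀ k < n, B1 (Pstar n) (X ^ k) = 0)
    (h : ℕ → ℝ) (hh : ∀ n, (h n) ^ 2 = B0 (P n) (P n)) (hhpos : ∀ n, 0 < h n)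
    (hstar : ℕ → ℝ) (hhs : ∀ n, (hstar n) ^ 2 = B1 (Pstar n) (Pstar n))
    (hhspos : ∀ n, 0 < hstar n) :
    ∀ n : ℕ, (hstar (n + 1)) ^ 2 = A (n + 1) * (h n) ^ 2 ∧ 0 < A (n + 1) := by
  -- B1 (Pstar m) q = 0 whenever deg q < m
  have hlow : ∀ m : ℕ, ∀ q : Polynomial ℝ, q.natDegree < m → B1 (Pstar m) q = 0 := by
    intro m q hq
    rw [q.as_sum_range' m hq, map_sum]
    apply Finset.sum_eq_zero
    intro i hi
    rw [← smul_X_eq_monomial, map_smul, hPsorth m i (Finset.mem_range.mp hi)]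
    simp
  have hdegP : ∀ m : ℕ, (P m).degree = (m : WithBot ℕ) := by
    intro m; rw [degree_eq_natDegree (hmonic m).ne_zero, hdeg]
  -- Pstar m is monic of degree m
  have hPsmonic : ∀ m : ℕ, (Pstar m).Monic ∧ (Pstar m).degree = (m : WithBot ℕ) := by
    intro m
    rcases Nat.eq_zero_or_pos m with hm | hm
    · subst hm; rw [hPs0]; exact ⟨hmonic 0, hdegP 0⟩
    · rw [hPs m hm]
      have h1 : (A m • P (m - 1)).degree < (P m).degree := by
        calc (A m • P (m - 1)).degree ≤ (P (m-1)).degree := degree_smul_le _ _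
          _ < (P m).degree := by
              rw [hdegP, hdegP]
              exact_mod_cast Nat.cast_lt.mpr (Nat.sub_lt hm Nat.one_pos)
      exact ⟨(hmonic m).add_of_left h1,
        by rw [degree_add_eq_left_of_degree_lt h1, hdegP]⟩
  intro n
  have hPsn0 : Pstar n ≠ 0 := (hPsmonic n).1.ne_zero
  have hXmonic : (X * Pstar n).Monic := monic_X.mul (hPsmonic n).1
  have hXdeg : (X * Pstar n).degree = ((n + 1 : ℕ) : WithBot ℕ) := by
    rw [degree_mul, degree_X, (hPsmonic n).2]
    push_cast; ring
  -- Pstar (n+1) - X * Pstar n has low degree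
  have hdiff : (Pstar (n+1) - X * Pstar n).natDegree ≤ n := by
    by_cases he : Pstar (n+1) = X * Pstar n
    · simp [he]
    · have hlt : (Pstar (n+1) - X * Pstar n).degree < (Pstar (n+1)).degree :=
        degree_sub_lt ((hPsmonic (n+1)).2.trans hXdeg.symm) (hPsmonic (n+1)).1.ne_zero
          (by rw [(hPsmonic (n+1)).1.leadingCoeff, hXmonic.leadingCoeff])
      rw [(hPsmonic (n+1)).2] at hlt
      have := natDegree_lt_iff_degree_lt (p := Pstar (n+1) - X * Pstar n)
        (sub_ne_zero.mpr he) |>.mpr hlt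
      omega
  -- key: B1 (Pstar (n+1)) (Pstar (n+1)) = B0 (Pstar (n+1)) (Pstar n)
  have key : B1 (Pstar (n+1)) (Pstar (n+1)) = B0 (Pstar (n+1)) (Pstar n) := by
    calc B1 (Pstar (n+1)) (Pstar (n+1))
        = B1 (Pstar (n+1)) (X * Pstar n) + B1 (Pstar (n+1)) (Pstar (n+1) - X * Pstar n) := by
          rw [← map_add]; congr 1; ring
      _ = B0 (Pstar (n+1)) (Pstar n) := by
          rw [hlow (n+1) _ (Nat.lt_succ_of_le hdiff), (hint (Pstar (n+1)) (Pstar n)).2]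
          ring
  -- compute B0 (Pstar (n+1)) (Pstar n) = A (n+1) * h n ^ 2
  have hexp : B0 (Pstar (n+1)) (Pstar n) = A (n+1) * (h n)^2 := by
    rw [hPs (n+1) (by omega)]
    have hq : B0 (P (n+1) + A (n+1) • P n) (Pstar n)
        = B0 (P (n+1)) (Pstar n) + A (n+1) * B0 (P n) (Pstar n) := by
      simp [map_add, LinearMap.add_apply, LinearMap.smul_apply]
    rw [show (n+1) - 1 = n from rfl, hq]
    rcases Nat.eq_zero_or_pos n with hn | hn
    · subst hn
      rw [hPs0, horth 1 0 (by omega), hh 0]; ring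
    · rw [hPs n hn]
      simp only [map_add, map_smul, smul_eq_mul]
      rw [horth (n+1) n (by omega), horth (n+1) (n-1) (by omega),
        horth n (n-1) (by omega), hh n]
      ring
  have heq : (hstar (n+1))^2 = A (n+1) * (h n)^2 := by
    rw [hhs, key, hexp]
  refine ⟨heq, ?_⟩
  have h1 : 0 < (hstar (n+1))^2 := pow_pos (hhspos _) 2
  have h2 : 0 < (h n)^2 := pow_pos (hhpos _) 2
  nlinarith [heq]
end

section
/- Let μ be a positive measure on ℝ of the form dμ(t) = t² dμ₂(t) where μ₂ is a positive measure with finite moments, and define [f,g]₂ = ((f(t)−f(0)−tf'(0))/t², g(t))₀ + f(0)[1, g]₂ + f'(0)[t, g]₂ with prescribed values [1,1]₂ = s₀**, [1,t]₂ = [t,1]₂ = s₁**, [t,t]₂ = s₂**, extended to be symmetric bilinear and satisfy [t²f, g]₂ = [f, t²g]₂ = (f,g)₀. Then [f,g]₂ = ∫ f g dμ₂ + (f(0), f'(0)) M (g(0), g'(0))ᵀ, where M is the symmetric 2×2 matrix with entries M₁₁ = s₀** − ∫ dμ₂, M₁₂ = M₂₁ = s₁** − ∫ t dμ₂, M₂₂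 = s₂** − ∫ t² dμ₂. -/
open Polynomial MeasureTheory

lemma poly_integrable (μ₂ : Measure ℝ) (h : ∀ n : ℕ, Integrable (fun t => t ^ n) μ₂)
    (p : Polynomial ℝ) : Integrable (fun t => p.eval t) μ₂ := by
  induction p using Polynomial.induction_on' with
  | add p q hp hq => simp only [eval_add]; exact hp.add hq
  | monomial n a => simpa [eval_monomial] using (h n).const_mul a

lemma quot_eval (f : Polynomial ℝ) (t : ℝ) :
    t ^ 2 * f.divX.divX.eval t = f.eval t - f.eval 0 - f.derivative.eval 0 * t := by
  have h0 : f.eval 0 = f.coeff 0 := (coeff_zero_eq_eval_zero f).symm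
  have h1 : f.derivative.eval 0 = f.coeff 1 := by
    rw [← coeff_zero_eq_eval_zero, coeff_derivative]; simp
  have hd : f.divX.coeff 0 = f.coeff 1 := coeff_divX
  rw [h0, h1]
  conv_rhs => rw [← f.divX_mul_X_add, ← f.divX.divX_mul_X_add, hd]
  simp [eval_mul, eval_add]
  ring

/-- The double Geronimus transform `[·,·]₂` of `(f,g)₀ = ∫ f g dμ`,
with `dμ = t² dμ₂`, is a Sobolev-type inner product:
`[f,g]₂ = ∫ f g dμ₂ + (f(0), f'(0)) M (g(0), g'(0))ᵀ`. -/
theorem double_geronimus_sobolev_representation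
    (μ μ₂ : Measure ℝ)
    (hμ₂mom : ∀ n : ℕ, Integrable (fun t => t ^ n) μ₂)
    (hrel : ∀ f : Polynomial ℝ, ∫ t, f.eval t ∂μ = ∫ t, t ^ 2 * f.eval t ∂μ₂)
    (s0 s1 s2 : ℝ)
    (B2 : LinearMap.BilinForm ℝ (Polynomial ℝ))
    (hB2symm : ∀ f g, B2 f g = B2 g f)
    (hint : ∀ f g : Polynomial ℝ, B2 (X ^ 2 * f) g = ∫ t, f.eval t * g.eval t ∂μ ∧
      B2 f (X ^ 2 * g) = ∫ t, f.eval t * g.eval t ∂μ)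
    (hB2 : ∀ f g : Polynomial ℝ, B2 f g =
      (∫ t, (f.divX.divX.eval t) * g.eval t ∂μ) + f.eval 0 * B2 1 g +
        (f.derivative.eval 0) * B2 X g)
    (hs0 : B2 1 1 = s0) (hs1 : B2 1 X = s1) (hs1' : B2 X 1 = s1) (hs2 : B2 X X = s2) :
    ∀ f g : Polynomial ℝ, B2 f g =
      (∫ t, f.eval t * g.eval t ∂μ₂) +
        (f.eval 0 * (s0 - ∫ t, (1 : ℝ) ∂μ₂) +
          f.derivative.eval 0 * (s1 - ∫ t, t ∂μ₂)) * g.eval 0 +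
        (f.eval 0 * (s1 - ∫ t, t ∂μ₂) +
          f.derivative.eval 0 * (s2 - ∫ t, t ^ 2 ∂μ₂)) * g.derivative.eval 0 := by
  have intP := poly_integrable μ₂ hμ₂mom
  -- general splitting lemma: ∫ q_h * r dμ = ∫ h r dμ₂ - h0 ∫ r - h'0 ∫ t r
  have key : ∀ h r : Polynomial ℝ,
      (∫ t, h.divX.divX.eval t * r.eval t ∂μ) =
        (∫ t, h.eval t * r.eval t ∂μ₂) - h.eval 0 * (∫ t, r.eval t ∂μ₂) -
          h.derivative.eval 0 * (∫ t, t * r.eval t ∂μ₂) := by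
    intro h r
    have h1 : (∫ t, h.divX.divX.eval t * r.eval t ∂μ) =
        ∫ t, t ^ 2 * ((h.divX.divX * r).eval t) ∂μ₂ := by
      simpa [eval_mul] using hrel (h.divX.divX * r)
    rw [h1]
    have h2 : ∀ t : ℝ, t ^ 2 * ((h.divX.divX * r).eval t) =
        (h * r).eval t - h.eval 0 * r.eval t - h.derivative.eval 0 * ((X * r).eval t) := by
      intro t
      have := quot_eval h t
      simp only [eval_mul, eval_X]
      linear_combination eval t r * this
    rw [integral_congr_ae (Filter.Eventually.of_forall h2)]
    have i1 : Integrable (fun t => (h * r).eval t) μ₂ := intP _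
    have i2 : Integrable (fun t => h.eval 0 * r.eval t) μ₂ := (intP r).const_mul _
    have i3 : Integrable (fun t => h.derivative.eval 0 * ((X * r).eval t)) μ₂ :=
      (intP (X * r)).const_mul _
    have i12 : Integrable (fun t => (h * r).eval t - h.eval 0 * r.eval t) μ₂ := i1.sub i2
    rw [integral_sub i12 i3, integral_sub i1 i2, MeasureTheory.integral_const_mul, MeasureTheory.integral_const_mul]
    simp [eval_mul]
  intro f g
  have e1g : B2 1 g = (∫ t, g.eval t ∂μ₂) - g.eval 0 * (∫ t, (1:ℝ) ∂μ₂) -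
      g.derivative.eval 0 * (∫ t, t ∂μ₂) + g.eval 0 * s0 + g.derivative.eval 0 * s1 := by
    rw [hB2symm, hB2 g 1, hs0, hs1', key g 1]
    simp
  have eXg : B2 X g = (∫ t, t * g.eval t ∂μ₂) - g.eval 0 * (∫ t, t ∂μ₂) -
      g.derivative.eval 0 * (∫ t, t ^ 2 ∂μ₂) + g.eval 0 * s1 + g.derivative.eval 0 * s2 := by
    rw [hB2symm, hB2 g X, hs1, hs2, key g X]
    simp only [eval_X]
    have hc1 : (∫ t, g.eval t * t ∂μ₂) = ∫ t, t * g.eval t ∂μ₂ := by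
      congr 1; ext t; ring
    have hc2 : (∫ t, t * t ∂μ₂) = ∫ t, t ^ 2 ∂μ₂ := by
      congr 1; ext t; ring
    rw [hc1, hc2]
  rw [hB2 f g, key f g, e1g, eXg]
  have hc : (∫ t, t * g.eval t ∂μ₂) = ∫ t, g.eval t * t ∂μ₂ := by
    congr 1; ext t; ring
  ring
end

section
/- Let (·,·)₀ be a positive definite symmetric bilinear form on real polynomials with monic orthogonal polynomials {Pₙ}, and let [·,·]₂ be a symmetric bilinear form with [t²f, g]₂ = [f, t²g]₂ = (f,g)₀. If Pₙ** is a monic polynomial of degree n ≥ 2 satisfying [Pₙ**, t^k]₂ = 0 for k = 0,...,n−1, then there exist real numbers Bₙ and Cₙ such that Pₙ**(t) = Pₙ(t) + Bₙ Pₙ₋₁(t) + Cₙ Pₙ₋₂(t). -/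
open Polynomial

lemma spanP_aux (P : ℕ → Polynomial ℝ)
    (hmonic : ∀ n, (P n).Monic) (hdeg : ∀ n, (P n).natDegree = n) :
    ∀ m (f : Polynomial ℝ), f.natDegree ≤ m →
      ∃ c : ℕ → ℝ, f = ∑ k ∈ Finset.range (m + 1), c k • P k := by
  intro m
  induction m with
  | zero =>
    intro f hf
    have h1 : P 0 = 1 := by
      have := hdeg 0
      exact (hmonic 0).natDegree_eq_zero.mp this
    refine ⟨fun _ => f.coeff 0, ?_⟩
    rw [Polynomial.eq_C_of_natDegree_le_zero hf]
    simp [h1, Polynomial.smul_eq_C_mul]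
  | succ m ih =>
    intro f hf
    set a := f.coeff (m + 1) with ha
    have hg : (f - a • P (m + 1)).natDegree ≤ m := by
      rw [Polynomial.natDegree_le_iff_coeff_eq_zero]
      intro j hj
      rw [Polynomial.coeff_sub, Polynomial.coeff_smul]
      rcases eq_or_lt_of_le (Nat.succ_le_of_lt hj) with h | h
      · rw [← h]
        have : (P (m+1)).coeff (m+1) = 1 := by
          have := (hmonic (m+1)).coeff_natDegree
          rwa [hdeg] at this
        simp [this, ha]
      · have h1 : f.coeff j = 0 := Polynomial.coeff_eq_zero_of_natDegree_lt (lt_of_le_of_lt hf h)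
        have h2 : (P (m+1)).coeff j = 0 := Polynomial.coeff_eq_zero_of_natDegree_lt (by rw [hdeg]; exact h)
        simp [h1, h2]
    obtain ⟨c, hc⟩ := ih _ hg
    refine ⟨fun k => if k = m + 1 then a else c k, ?_⟩
    rw [Finset.sum_range_succ]
    beta_reduce
    have : ∑ k ∈ Finset.range (m + 1), (if k = m + 1 then a else c k) • P k
        = ∑ k ∈ Finset.range (m + 1), c k • P k := by
      apply Finset.sum_congr rfl
      intro k hk
      rw [if_neg (Nat.ne_of_lt (Finset.mem_range.mp hk))]
    rw [this, if_pos rfl, ← hc]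
    ring

/-- A monic degree-`n` (`n ≥ 2`) polynomial orthogonal to all lower degrees
with respect to the double Geronimus transform `[·,·]₂` has the form
`Pₙ** = Pₙ + Bₙ Pₙ₋₁ + Cₙ Pₙ₋₂`. -/
theorem double_geronimus_poly_repr
    (B0 B2 : LinearMap.BilinForm ℝ (Polynomial ℝ))
    (hB0symm : ∀ f g, B0 f g = B0 g f)
    (hB0pos : ∀ f : Polynomial ℝ, f ≠ 0 → 0 < B0 f f)
    (hB2symm : ∀ f g, B2 f g = B2 g f)
    (hint : ∀ f g : Polynomial ℝ, B2 (X ^ 2 * f) g = B0 f g ∧ B2 f (X ^ 2 * g) = B0 f g)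
    (P : ℕ → Polynomial ℝ)
    (hmonic : ∀ n, (P n).Monic) (hdeg : ∀ n, (P n).natDegree = n)
    (horth : ∀ n m, n ≠ m → B0 (P n) (P m) = 0)
    (n : ℕ) (hn : 2 ≤ n)
    (Pss : Polynomial ℝ) (hPssm : Pss.Monic) (hPssd : Pss.natDegree = n)
    (hPsso : ∀ k < n, B2 Pss (X ^ k) = 0) :
    ∃ Bn Cn : ℝ, Pss = P n + Bn • P (n - 1) + Cn • P (n - 2) := by
  -- B0 Pss X^j = 0 for j + 2 < n
  have hssX : ∀ j : ℕ, j + 2 < n → B0 Pss (X ^ j) = 0 := by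
    intro j hj
    have h := (hint Pss (X ^ j)).2
    rw [← h]
    have : (X : Polynomial ℝ) ^ 2 * X ^ j = X ^ (2 + j) := (pow_add X 2 j).symm
    rw [this]
    exact hPsso (2 + j) (by omega)
  -- B0 Pss q = 0 for natDegree q + 2 < n
  have hssq : ∀ q : Polynomial ℝ, q.natDegree + 2 < n → B0 Pss q = 0 := by
    intro q hq
    have hrepr : q = ∑ j ∈ Finset.range (q.natDegree + 1), q.coeff j • X ^ j := by
      conv_lhs => rw [Polynomial.as_sum_range' q (q.natDegree + 1) (Nat.lt_succ_self _)]
      apply Finset.sum_congr rfl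
      intro j _
      rw [Polynomial.smul_X_eq_monomial]
    rw [hrepr, map_sum]
    apply Finset.sum_eq_zero
    intro j hj
    rw [map_smul, smul_eq_mul, hssX j (by simp at hj; omega)]
    ring
  set d1 := B0 (P (n-1)) (P (n-1)) with hd1
  set d2 := B0 (P (n-2)) (P (n-2)) with hd2
  have hd1pos : 0 < d1 := hB0pos _ (hmonic (n-1)).ne_zero
  have hd2pos : 0 < d2 := hB0pos _ (hmonic (n-2)).ne_zero
  set Bn := B0 Pss (P (n-1)) / d1 with hBn
  set Cn := B0 Pss (P (n-2)) / d2 with hCn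
  set R := Pss - P n - Bn • P (n-1) - Cn • P (n-2) with hR
  -- R has natDegree ≤ n - 1
  have hRdeg : R.natDegree ≤ n - 1 := by
    rw [Polynomial.natDegree_le_iff_coeff_eq_zero]
    intro j hj
    have hjn : n ≤ j := by omega
    have c1 : (P (n-1)).coeff j = 0 := Polynomial.coeff_eq_zero_of_natDegree_lt (by rw [hdeg]; omega)
    have c2 : (P (n-2)).coeff j = 0 := Polynomial.coeff_eq_zero_of_natDegree_lt (by rw [hdeg]; omega)
    rcases eq_or_lt_of_le hjn with h | h
    · have cp : (P n).coeff j = 0 - (-1) := by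
        rw [← h]
        have := (hmonic n).coeff_natDegree
        rw [hdeg] at this
        simp [this]
      have cs : Pss.coeff j = 1 := by
        rw [← h]; have := hPssm.coeff_natDegree; rwa [hPssd] at this
      simp [hR, Polynomial.coeff_sub, Polynomial.coeff_smul, cs, c1, c2]
      have : (P n).coeff j = 1 := by
        rw [← h]; have := (hmonic n).coeff_natDegree; rwa [hdeg] at this
      simp [this]
    · have cs : Pss.coeff j = 0 := Polynomial.coeff_eq_zero_of_natDegree_lt (by rw [hPssd]; omega)
      have cp : (P n).coeff j = 0 := Polynomial.coeff_eq_zero_of_natDegree_lt (by rw [hdeg]; omega)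
      simp [hR, Polynomial.coeff_sub, Polynomial.coeff_smul, cs, cp, c1, c2]
  -- B0 R (P k) = 0 for all k < n
  have hRorth : ∀ k < n, B0 R (P k) = 0 := by
    intro k hk
    have expand : B0 R (P k) = B0 Pss (P k) - B0 (P n) (P k)
        - Bn * B0 (P (n-1)) (P k) - Cn * B0 (P (n-2)) (P k) := by
      simp [hR, map_sub, LinearMap.sub_apply, map_smul, LinearMap.smul_apply, smul_eq_mul]
    rcases Nat.lt_or_ge (k + 2) n with h | h
    · rw [expand, hssq (P k) (by rw [hdeg]; exact h),
        horth n k (by omega), horth (n-1) k (by omega), horth (n-2) k (by omega)]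
      ring
    · -- k = n-1 or k = n-2
      rcases (by omega : k = n - 1 ∨ k = n - 2) with h | h
      · subst h
        rw [expand, horth n (n-1) (by omega), horth (n-2) (n-1) (by omega), hBn, ← hd1]
        field_simp
        ring
      · subst h
        rw [expand, horth n (n-2) (by omega), horth (n-1) (n-2) (by omega), hCn, ← hd2]
        field_simp
        ring
  -- R = 0
  have hR0 : R = 0 := by
    by_contra hne
    obtain ⟨c, hc⟩ := spanP_aux P hmonic hdeg (n-1) R hRdeg
    have : B0 R R = 0 := by
      rw [congrArg (B0 R) hc, map_sum]
      apply Finset.sum_eq_zero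
      intro k hk
      rw [map_smul, smul_eq_mul, hRorth k (by simp at hk; omega)]
      ring
    exact absurd this (ne_of_gt (hB0pos R hne))
  refine ⟨Bn, Cn, ?_⟩
  have : Pss - (P n + Bn • P (n-1) + Cn • P (n-2)) = R := by rw [hR]; ring
  have h0 : Pss - (P n + Bn • P (n-1) + Cn • P (n-2)) = 0 := by rw [this, hR0]
  exact sub_eq_zero.mp h0
end

section
/- Let [·,·]₂ be a positive definite symmetric bilinear form on real polynomials with [t²f,g]₂ = [f,t²g]₂ = (f,g)₀ where (·,·)₀ is positive definite with monic orthogonal polynomials {Pₙ} and norms hₙ² = (Pₙ,Pₙ)₀. If Pₙ** = Pₙ + BₙPₙ₋₁ + CₙPₙ₋₂ are the monic orthogonal polynomials for [·,·]₂ with norms (hₙ**)² = [Pₙ**, Pₙ**]₂, then (hₙ₊₂**)² = Cₙ₊₂ hₙ² for all n ≥ 0; in particular Cₙ₊₂ > 0. -/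
open Polynomial

/-- For the double Geronimus transform, `(hₙ₊₂**)² = Cₙ₊₂ hₙ²`;
in particular `Cₙ₊₂ > 0`. -/
theorem double_geronimus_norm_relation
    (B0 B2 : LinearMap.BilinForm ℝ (Polynomial ℝ))
    (hB0symm : ∀ f g, B0 f g = B0 g f)
    (hB0pos : ∀ f : Polynomial ℝ, f ≠ 0 → 0 < B0 f f)
    (hB2symm : ∀ f g, B2 f g = B2 g f)
    (hB2pos : ∀ f : Polynomial ℝ, f ≠ 0 → 0 < B2 f f)
    (hint : ∀ f g : Polynomial ℝ, B2 (X ^ 2 * f) g = B0 f g ∧ B2 f (X ^ 2 * g) = B0 f g)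
    (P : ℕ → Polynomial ℝ)
    (hmonic : ∀ n, (P n).Monic) (hdeg : ∀ n, (P n).natDegree = n)
    (horth : ∀ n m, n ≠ m → B0 (P n) (P m) = 0)
    (B C : ℕ → ℝ)
    (Pss : ℕ → Polynomial ℝ)
    (hPss0 : Pss 0 = P 0)
    (hPss1 : Pss 1 = P 1 + B 1 • P 0)
    (hPss : ∀ n, 2 ≤ n → Pss n = P n + B n • P (n - 1) + C n • P (n - 2))
    (hPssorth : ∀ n, ∀ k < n, B2 (Pss n) (X ^ k) = 0)
    (h : ℕ → ℝ) (hh : ∀ n, (h n) ^ 2 = B0 (P n) (P n)) (hhpos : ∀ n, 0 < h n)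
    (hss : ℕ → ℝ) (hhss : ∀ n, (hss n) ^ 2 = B2 (Pss n) (Pss n))
    (hhsspos : ∀ n, 0 < hss n) :
    ∀ n : ℕ, (hss (n + 2)) ^ 2 = C (n + 2) * (h n) ^ 2 ∧ 0 < C (n + 2) := by
  -- auxiliary: B2 q (Pss m) = 0 for degree q < m
  have aux : ∀ m : ℕ, ∀ q : Polynomial ℝ, q.degree < (m : ℕ) → B2 q (Pss m) = 0 := by
    intro m q hq
    have hq' : q ∈ Polynomial.degreeLT ℝ m := Polynomial.mem_degreeLT.mpr hq
    rw [Polynomial.degreeLT_eq_span_X_pow] at hq'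
    have hle : Submodule.span ℝ ↑((Finset.range m).image fun n => (X : Polynomial ℝ) ^ n)
        ≤ LinearMap.ker (B2.flip (Pss m)) := by
      rw [Submodule.span_le]
      intro p hp
      simp only [Finset.coe_image, Set.mem_image, Finset.mem_coe, Finset.mem_range] at hp
      obtain ⟨k, hk, rfl⟩ := hp
      simp only [SetLike.mem_coe, LinearMap.mem_ker]
      show B2 (X ^ k) (Pss m) = 0
      rw [hB2symm (X ^ k) (Pss m)]
      exact hPssorth m k hk
    have := hle hq'
    simpa using this
  intro n
  have hP2 : Pss (n + 2) = P (n + 2) + B (n + 2) • P (n + 1) + C (n + 2) • P n := by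
    have := hPss (n + 2) (by omega)
    simpa using this
  -- Pss (n+2) is monic of degree n+2
  have hdegPss : (Pss (n + 2)).Monic ∧ (Pss (n + 2)).degree = ((n + 2 : ℕ) : WithBot ℕ) := by
    have hm2 : (P (n + 2)).Monic := hmonic (n + 2)
    have hd2 : (P (n + 2)).degree = ((n + 2 : ℕ) : WithBot ℕ) := by
      rw [Polynomial.degree_eq_natDegree hm2.ne_zero, hdeg]
    have hlow : (B (n + 2) • P (n + 1) + C (n + 2) • P n).degree < ((n + 2 : ℕ) : WithBot ℕ) := by
      apply lt_of_le_of_lt (Polynomial.degree_add_le _ _)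
      apply max_lt
      · apply lt_of_le_of_lt (Polynomial.degree_smul_le _ _)
        apply lt_of_le_of_lt Polynomial.degree_le_natDegree
        rw [hdeg]
        exact_mod_cast Nat.lt_succ_self (n + 1)
      · apply lt_of_le_of_lt (Polynomial.degree_smul_le _ _)
        apply lt_of_le_of_lt Polynomial.degree_le_natDegree
        rw [hdeg]
        exact_mod_cast (by omega : n < n + 2)
    have hmono : (Pss (n + 2)).Monic := by
      rw [hP2, add_assoc]
      exact hm2.add_of_left (hd2 ▸ hlow)
    constructor
    · exact hmono
    · rw [hP2, add_assoc, Polynomial.degree_add_eq_left_of_degree_lt (hd2 ▸ hlow), hd2]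
  -- X^2 * P n is monic of degree n + 2
  have hXP : ((X : Polynomial ℝ) ^ 2 * P n).Monic := by
    exact (monic_X_pow 2).mul (hmonic n)
  have hXPdeg : ((X : Polynomial ℝ) ^ 2 * P n).degree = ((n + 2 : ℕ) : WithBot ℕ) := by
    rw [Polynomial.degree_mul, Polynomial.degree_X_pow,
      Polynomial.degree_eq_natDegree (hmonic n).ne_zero, hdeg]
    exact_mod_cast congrArg (Nat.cast : ℕ → WithBot ℕ) (by omega : 2 + n = n + 2)
  -- difference has degree < n + 2
  have hdiff : ((X : Polynomial ℝ) ^ 2 * P n - Pss (n + 2)).degree < ((n + 2 : ℕ) : WithBot ℕ) := by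
    by_cases heq : (X : Polynomial ℝ) ^ 2 * P n - Pss (n + 2) = 0
    · rw [heq, Polynomial.degree_zero]; exact WithBot.bot_lt_coe _
    · have := Polynomial.degree_sub_lt (hXPdeg.trans hdegPss.2.symm) hXP.ne_zero
        (hXP.leadingCoeff.trans hdegPss.1.leadingCoeff.symm)
      rwa [hXPdeg] at this
  have hzero : B2 ((X : Polynomial ℝ) ^ 2 * P n - Pss (n + 2)) (Pss (n + 2)) = 0 :=
    aux (n + 2) _ hdiff
  have key : B2 (Pss (n + 2)) (Pss (n + 2)) = B0 (P n) (Pss (n + 2)) := by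
    have := (hint (P n) (Pss (n + 2))).1
    rw [← this]
    have hsub : B2 ((X : Polynomial ℝ) ^ 2 * P n) (Pss (n + 2))
        - B2 (Pss (n + 2)) (Pss (n + 2)) = 0 := by
      rw [← LinearMap.sub_apply, ← map_sub]
      exact hzero
    linarith
  have hval : B0 (P n) (Pss (n + 2)) = C (n + 2) * B0 (P n) (P n) := by
    rw [hP2]
    rw [map_add, map_add, map_smul, map_smul]
    rw [horth n (n + 2) (by omega), horth n (n + 1) (by omega)]
    simp
  have heq1 : (hss (n + 2)) ^ 2 = C (n + 2) * (h n) ^ 2 := by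
    rw [hhss, key, hval, hh]
  refine ⟨heq1, ?_⟩
  have h1 : 0 < (hss (n + 2)) ^ 2 := pow_pos (hhsspos _) 2
  have h2 : 0 < (h n) ^ 2 := pow_pos (hhpos _) 2
  nlinarith
end

section
/- Let {Pₙ} and {Pₙ**} be sequences of monic polynomials with deg Pₙ = deg Pₙ** = n, related by Pₙ** = Pₙ + BₙPₙ₋₁ + CₙPₙ₋₂ and t²Pₙ(t) = Pₙ₊₂**(t) + Dₙ₊₁Pₙ₊₁**(t) + Eₙ₊₁Pₙ**(t) for all n. Let L_mon be the lower triangular banded matrix with 1's on the diagonal, Bₙ on the first subdiagonal, Cₙ on the second subdiagonal, and U_mon the upper triangular banded matrix with Eₙ₊₁ on the diagonal, Dₙ₊₁ on the first superdiagonal, and 1's on the second superdiagonal. If J_mon and J_mon** denote the matrices of multiplication by t in the bases {Pₙ} and {Pₙ**} respectively (tP = J_mon P, tP** = J_mon** P**), then J_mon² = U_mon L_mon and (J_mon**)² = L_mon U_mon. -/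
open Polynomial


/-- Uniqueness of coefficients in an expansion w.r.t. a graded monic family. -/
lemma dg_uniq (P : ℕ → Polynomial ℝ) (hm : ∀ n, (P n).Monic)
    (hd : ∀ n, (P n).natDegree = n) :
    ∀ N (c : ℕ → ℝ), (∑ m ∈ Finset.range N, c m • P m) = 0 → ∀ m < N, c m = 0 := by
  intro N
  induction N with
  | zero => intro c _ m hm'; omega
  | succ N ih =>
    intro c hc m hmN
    have hcN : c N = 0 := by
      have h0 := congrArg (fun p => Polynomial.coeff p N) hc
      simp only [Polynomial.finset_sum_coeff, Polynomial.coeff_smul,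
        Polynomial.coeff_zero, smul_eq_mul] at h0
      rw [Finset.sum_range_succ] at h0
      have hz : ∀ k ∈ Finset.range N, c k * (P k).coeff N = 0 := by
        intro k hk
        rw [Polynomial.coeff_eq_zero_of_natDegree_lt, mul_zero]
        rw [hd]; exact Finset.mem_range.mp hk
      rw [Finset.sum_eq_zero hz, zero_add] at h0
      have h1 : (P N).coeff N = 1 := by
        have := (hm N).coeff_natDegree; rwa [hd] at this
      rwa [h1, mul_one] at h0
    rcases Nat.lt_succ_iff_lt_or_eq.mp hmN with h | h
    · apply ih c _ m h
      rwa [Finset.sum_range_succ, hcN, zero_smul, add_zero] at hc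
    · rw [h]; exact hcN

lemma dg_uniq' (P : ℕ → Polynomial ℝ) (hm : ∀ n, (P n).Monic)
    (hd : ∀ n, (P n).natDegree = n) (N : ℕ) (a b : ℕ → ℝ)
    (h : (∑ m ∈ Finset.range N, a m • P m) = ∑ m ∈ Finset.range N, b m • P m) :
    ∀ m < N, a m = b m := by
  intro m hmN
  have h0 : (∑ m ∈ Finset.range N, (a m - b m) • P m) = 0 := by
    simp only [sub_smul, Finset.sum_sub_distrib, h, sub_self]
  have := dg_uniq P hm hd N (fun m => a m - b m) h0 m hmN
  simpa using sub_eq_zero.mp this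

/-- Expansion of `X^2 * P n` via the Jacobi-type matrix squared. -/
lemma dg_Jsq (P : ℕ → Polynomial ℝ) (J : ℕ → ℕ → ℝ)
    (hact : ∀ n, X * P n = ∑ m ∈ Finset.range (n + 2), J n m • P m)
    (hband : ∀ n m, n + 2 ≤ m → J n m = 0) (n : ℕ) :
    X ^ 2 * P n = ∑ m ∈ Finset.range (n + 5),
      (∑ k ∈ Finset.range (n + 3), J n k * J k m) • P m := by
  have step1 : X ^ 2 * P n = ∑ k ∈ Finset.range (n + 3), J n k • (X * P k) := by
    have : X ^ 2 * P n = X * (X * P n) := by ring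
    rw [this, hact n, Finset.mul_sum]
    rw [Finset.sum_range_succ (fun k => J n k • (X * P k))]
    rw [hband n (n + 2) le_rfl, zero_smul, add_zero]
    exact Finset.sum_congr rfl (fun k _ => (mul_smul_comm _ _ _))
  rw [step1]
  have step2 : ∀ k ∈ Finset.range (n + 3),
      J n k • (X * P k) = ∑ m ∈ Finset.range (n + 5), (J n k * J k m) • P m := by
    intro k hk
    have hk' : k < n + 3 := Finset.mem_range.mp hk
    have hext : X * P k = ∑ m ∈ Finset.range (n + 5), J k m • P m := by
      rw [hact k]
      apply Finset.sum_subset (Finset.range_subset_range.mpr (by omega))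
      intro m _ hm
      have hm' : ¬ m < k + 2 := Finset.mem_range.not.mp hm
      rw [hband k m (by omega), zero_smul]
    rw [hext, Finset.smul_sum]
    exact Finset.sum_congr rfl (fun m _ => (smul_smul _ _ _))
  rw [Finset.sum_congr rfl step2, Finset.sum_comm]
  exact Finset.sum_congr rfl (fun m _ => by rw [Finset.sum_smul])

/-- For the double Geronimus transformation, `J_mon² = U_mon L_mon`
and `(J_mon**)² = L_mon U_mon`. -/
theorem double_geronimus_darboux_factorization
    (P Pss : ℕ → Polynomial ℝ)
    (hmonic : ∀ n, (P n).Monic) (hdeg : ∀ n, (P n).natDegree = n)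
    (hssmonic : ∀ n, (Pss n).Monic) (hssdeg : ∀ n, (Pss n).natDegree = n)
    (B C D E : ℕ → ℝ)
    (hPss0 : Pss 0 = P 0)
    (hPss1 : Pss 1 = P 1 + B 1 • P 0)
    (hPss : ∀ n, 2 ≤ n → Pss n = P n + B n • P (n - 1) + C n • P (n - 2))
    (hDE : ∀ n : ℕ,
      X ^ 2 * P n = Pss (n + 2) + D (n + 1) • Pss (n + 1) + E (n + 1) • Pss n)
    (Jmon Jss : ℕ → ℕ → ℝ)
    (hJmonact : ∀ n, X * P n = ∑ m ∈ Finset.range (n + 2), Jmon n m • P m)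
    (hJmonband : ∀ n m, n + 2 ≤ m → Jmon n m = 0)
    (hJssact : ∀ n, X * Pss n = ∑ m ∈ Finset.range (n + 2), Jss n m • Pss m)
    (hJssband : ∀ n m, n + 2 ≤ m → Jss n m = 0)
    (Lm Um : ℕ → ℕ → ℝ)
    (hLm : ∀ n m, Lm n m =
      if m = n then 1 else if m + 1 = n then B n else if m + 2 = n then C n else 0)
    (hUm : ∀ n m, Um n m =
      if m = n then E (n + 1) else if m = n + 1 then D (n + 1)
      else if m = n + 2 then 1 else 0) :
    (∀ n m, (∑ k ∈ Finset.range (n + 3), Jmon n k * Jmon k m) =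
      ∑ k ∈ Finset.range (n + 3), Um n k * Lm k m) ∧
    (∀ n m, (∑ k ∈ Finset.range (n + 3), Jss n k * Jss k m) =
      ∑ k ∈ Finset.range (n + 3), Lm n k * Um k m) := by
  -- expansion of Pss k in the P basis via Lm
  have keyL : ∀ k M, k < M → (∑ m ∈ Finset.range M, Lm k m • P m) = Pss k := by
    intro k M hkM
    have hsub : (∑ m ∈ Finset.range M, Lm k m • P m)
        = ∑ m ∈ Finset.range (k + 1), Lm k m • P m := by
      symm
      apply Finset.sum_subset (Finset.range_subset_range.mpr (by omega))
      intro m _ hm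
      have hm' : ¬ m < k + 1 := Finset.mem_range.not.mp hm
      rw [hLm]; split_ifs <;> first | omega | rw [zero_smul]
    rw [hsub]
    match k with
    | 0 => simp [hLm, hPss0]
    | 1 =>
      rw [Finset.sum_range_succ, Finset.sum_range_one, hPss1]
      simp [hLm]; ring
    | (j + 2) =>
      rw [Finset.sum_range_succ, Finset.sum_range_succ, Finset.sum_range_succ]
      have hz : (∑ m ∈ Finset.range j, Lm (j + 2) m • P m) = 0 := by
        apply Finset.sum_eq_zero
        intro m hm
        have hm' : m < j := Finset.mem_range.mp hm
        rw [hLm]; split_ifs <;> first | omega | rw [zero_smul]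
      rw [hz, zero_add, hPss (j + 2) (by omega)]
      have e1 : Lm (j + 2) (j + 2) = 1 := by rw [hLm]; simp
      have e2 : Lm (j + 2) (j + 1) = B (j + 2) := by
        rw [hLm]; split_ifs <;> first | omega | rfl
      have e3 : Lm (j + 2) j = C (j + 2) := by
        rw [hLm]; split_ifs <;> first | omega | rfl
      rw [e1, e2, e3, one_smul]
      have : j + 2 - 1 = j + 1 := by omega
      rw [this]
      have : j + 2 - 2 = j := by omega
      rw [this]; ring
  -- picking out the three nonzero entries of a row of Um
  have pickU : ∀ (k M : ℕ) (f : ℕ → Polynomial ℝ), k + 2 < M →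
      (∑ m ∈ Finset.range M, Um k m • f m)
        = E (k + 1) • f k + D (k + 1) • f (k + 1) + f (k + 2) := by
    intro k M f hkM
    have hsub : (∑ m ∈ Finset.range M, Um k m • f m)
        = ∑ m ∈ Finset.range (k + 3), Um k m • f m := by
      symm
      apply Finset.sum_subset (Finset.range_subset_range.mpr (by omega))
      intro m _ hm
      have hm' : ¬ m < k + 3 := Finset.mem_range.not.mp hm
      rw [hUm]; split_ifs <;> first | omega | rw [zero_smul]
    rw [hsub, Finset.sum_range_succ, Finset.sum_range_succ, Finset.sum_range_succ]
    have hz : (∑ m ∈ Finset.range k, Um k m • f m) = 0 := by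
      apply Finset.sum_eq_zero
      intro m hm
      have hm' : m < k := Finset.mem_range.mp hm
      rw [hUm]; split_ifs <;> first | omega | rw [zero_smul]
    have e1 : Um k k = E (k + 1) := by rw [hUm]; simp
    have e2 : Um k (k + 1) = D (k + 1) := by
      rw [hUm]; split_ifs <;> first | omega | rfl
    have e3 : Um k (k + 2) = 1 := by
      rw [hUm]; split_ifs <;> first | omega | rfl
    rw [hz, zero_add, e1, e2, e3, one_smul]
  constructor
  · -- J_mon² = U_mon L_mon
    intro n m
    have hUL : X ^ 2 * P n = ∑ m ∈ Finset.range (n + 5),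
        (∑ k ∈ Finset.range (n + 3), Um n k * Lm k m) • P m := by
      have h1 : X ^ 2 * P n = ∑ k ∈ Finset.range (n + 3), Um n k • Pss k := by
        rw [pickU n (n + 3) Pss (by omega), hDE n]; ring
      rw [h1]
      have h2 : ∀ k ∈ Finset.range (n + 3),
          Um n k • Pss k = ∑ m ∈ Finset.range (n + 5), (Um n k * Lm k m) • P m := by
        intro k hk
        have hk' : k < n + 3 := Finset.mem_range.mp hk
        rw [← keyL k (n + 5) (by omega), Finset.smul_sum]
        exact Finset.sum_congr rfl (fun m _ => (smul_smul _ _ _))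
      rw [Finset.sum_congr rfl h2, Finset.sum_comm]
      exact Finset.sum_congr rfl (fun m _ => by rw [Finset.sum_smul])
    have hJJ := dg_Jsq P Jmon hJmonact hJmonband n
    by_cases hm : m < n + 5
    · exact dg_uniq' P hmonic hdeg (n + 5) _ _ (hJJ.symm.trans hUL) m hm
    · have hL : (∑ k ∈ Finset.range (n + 3), Jmon n k * Jmon k m) = 0 := by
        apply Finset.sum_eq_zero
        intro k hk
        have hk' : k < n + 3 := Finset.mem_range.mp hk
        rw [hJmonband k m (by omega), mul_zero]
      have hR : (∑ k ∈ Finset.range (n + 3), Um n k * Lm k m) = 0 := by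
        apply Finset.sum_eq_zero
        intro k hk
        have hk' : k < n + 3 := Finset.mem_range.mp hk
        have : Lm k m = 0 := by rw [hLm]; split_ifs <;> first | omega | rfl
        rw [this, mul_zero]
      rw [hL, hR]
  · -- (J_mon**)² = L_mon U_mon
    intro n m
    have hLU : X ^ 2 * Pss n = ∑ m ∈ Finset.range (n + 5),
        (∑ k ∈ Finset.range (n + 3), Lm n k * Um k m) • Pss m := by
      have h1 : X ^ 2 * Pss n = ∑ k ∈ Finset.range (n + 3), Lm n k • (X ^ 2 * P k) := by
        rw [← keyL n (n + 3) (by omega), Finset.mul_sum]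
        exact Finset.sum_congr rfl (fun k _ => (mul_smul_comm _ _ _))
      rw [h1]
      have h2 : ∀ k ∈ Finset.range (n + 3),
          Lm n k • (X ^ 2 * P k)
            = ∑ m ∈ Finset.range (n + 5), (Lm n k * Um k m) • Pss m := by
        intro k hk
        have hk' : k < n + 3 := Finset.mem_range.mp hk
        have hexp : X ^ 2 * P k = ∑ m ∈ Finset.range (n + 5), Um k m • Pss m := by
          rw [pickU k (n + 5) Pss (by omega), hDE k]; ring
        rw [hexp, Finset.smul_sum]
        exact Finset.sum_congr rfl (fun m _ => (smul_smul _ _ _))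
      rw [Finset.sum_congr rfl h2, Finset.sum_comm]
      exact Finset.sum_congr rfl (fun m _ => by rw [Finset.sum_smul])
    have hJJ := dg_Jsq Pss Jss hJssact hJssband n
    by_cases hm : m < n + 5
    · exact dg_uniq' Pss hssmonic hssdeg (n + 5) _ _ (hJJ.symm.trans hLU) m hm
    · have hL : (∑ k ∈ Finset.range (n + 3), Jss n k * Jss k m) = 0 := by
        apply Finset.sum_eq_zero
        intro k hk
        have hk' : k < n + 3 := Finset.mem_range.mp hk
        rw [hJssband k m (by omega), mul_zero]
      have hR : (∑ k ∈ Finset.range (n + 3), Lm n k * Um k m) = 0 := by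
        apply Finset.sum_eq_zero
        intro k hk
        have hk' : k < n + 3 := Finset.mem_range.mp hk
        have : Um k m = 0 := by rw [hUm]; split_ifs <;> first | omega | rfl
        rw [this, mul_zero]
      rw [hL, hR]
end

section
/- Let L be the infinite lower bidiagonal matrix with diagonal entries ℓₙ = hₙ/hₙ* and subdiagonal entries Aₙ₊₁hₙ/hₙ₊₁* (n ≥ 0), where hₙ² = (Pₙ,Pₙ)₀, (hₙ*)² = [Pₙ*,Pₙ*]₁, Pₙ* = Pₙ + AₙPₙ₋₁ are the monic orthogonal polynomials of the Geronimus transform [·,·]₁ of (·,·)₀, and J* = ([t P̂ₙ*, P̂ₘ*]₁) is the symmetric Jacobi matrix in the orthonormal basis P̂ₙ* = Pₙ*/hₙ*. Then J* = LLᵀ; consequently every entry of J* on or off the diagonal is expressible as: Jₙₙ* = hₙ²/(hₙ*)² + Aₙ²hₙ₋₁²/(hₙ*)², Jₙ₊₁,ₙ* = Aₙ₊₁hₙ²/(hₙ*hₙ₊₁*). -/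
open Polynomial

/-- The symmetric Jacobi matrix `J*` of the Geronimus transform in the
orthonormal basis admits the Cholesky factorization `J* = L Lᵀ`, with the indicated
entries of `L` and of `J*`. -/
theorem geronimus_jacobi_cholesky
    (B0 B1 : LinearMap.BilinForm ℝ (Polynomial ℝ))
    (hB0symm : ∀ f g, B0 f g = B0 g f)
    (hB0pos : ∀ f : Polynomial ℝ, f ≠ 0 → 0 < B0 f f)
    (hB1symm : ∀ f g, B1 f g = B1 g f)
    (hB1pos : ∀ f : Polynomial ℝ, f ≠ 0 → 0 < B1 f f)
    (hint : ∀ f g : Polynomial ℝ, B1 (X * f) g = B0 f g ∧ B1 f (X * g) = B0 f g)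
    (P : ℕ → Polynomial ℝ)
    (hmonic : ∀ n, (P n).Monic) (hdeg : ∀ n, (P n).natDegree = n)
    (horth : ∀ n m, n ≠ m → B0 (P n) (P m) = 0)
    (A : ℕ → ℝ) (hA0 : A 0 = 0)
    (Pstar : ℕ → Polynomial ℝ)
    (hPs0 : Pstar 0 = P 0)
    (hPs : ∀ n, 1 ≤ n → Pstar n = P n + A n • P (n - 1))
    (hPsorth : ∀ n, ∀ k < n, B1 (Pstar n) (X ^ k) = 0)
    (h : ℕ → ℝ) (hh : ∀ n, (h n) ^ 2 = B0 (P n) (P n)) (hhpos : ∀ n, 0 < h n)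
    (hstar : ℕ → ℝ) (hhs : ∀ n, (hstar n) ^ 2 = B1 (Pstar n) (Pstar n))
    (hhspos : ∀ n, 0 < hstar n)
    (Jstar : ℕ → ℕ → ℝ)
    (hJstar : ∀ n m, Jstar n m = B1 (X * Pstar n) (Pstar m) / (hstar n * hstar m))
    (L : ℕ → ℕ → ℝ)
    (hL : ∀ n m, L n m =
      if m = n then h n / hstar n
      else if m + 1 = n then A n * h (n - 1) / hstar n else 0) :
    (∀ n m, Jstar n m = ∑ k ∈ Finset.range (max n m + 1), L n k * L m k) ∧
    (∀ n, Jstar n n =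
      (h n) ^ 2 / (hstar n) ^ 2 + (A n) ^ 2 * (h (n - 1)) ^ 2 / (hstar n) ^ 2) ∧
    (∀ n, Jstar (n + 1) n = A (n + 1) * (h n) ^ 2 / (hstar n * hstar (n + 1))) := by
  have hs0 : ∀ n, hstar n ≠ 0 := fun n => (hhspos n).ne'
  have hB0PP : ∀ n m, B0 (P n) (P m) = if n = m then (h n) ^ 2 else 0 := by
    intro n m
    by_cases hnm : n = m
    · subst hnm; simp [hh n]
    · simp [hnm, horth n m hnm]
  have hPsall : ∀ n, Pstar n = P n + A n • P (n - 1) := by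
    intro n
    rcases Nat.eq_zero_or_pos n with h0 | h1
    · subst h0; simp [hPs0, hA0]
    · exact hPs n h1
  have hB0Ps : ∀ n m, B0 (Pstar n) (Pstar m) =
      B0 (P n) (P m) + A m * B0 (P n) (P (m - 1)) + A n * B0 (P (n - 1)) (P m)
        + A n * A m * B0 (P (n - 1)) (P (m - 1)) := by
    intro n m
    rw [hPsall n, hPsall m]
    simp only [map_add, map_smul, LinearMap.add_apply, LinearMap.smul_apply, smul_eq_mul]
    ring
  have hdiag : ∀ n, B0 (Pstar n) (Pstar n) = (h n) ^ 2 + (A n) ^ 2 * (h (n - 1)) ^ 2 := by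
    intro n
    rw [hB0Ps]
    rcases n with _ | s
    · simp only [hB0PP, Nat.zero_sub, eq_self_iff_true, if_true, hA0]
      ring
    · have h1 : ¬ (s + 1 = s + 1 - 1) := by omega
      have h2 : ¬ (s + 1 - 1 = s + 1) := by omega
      simp only [hB0PP, h1, h2, eq_self_iff_true, if_true, if_false]
      ring
  have hoff : ∀ n, B0 (Pstar (n + 1)) (Pstar n) = A (n + 1) * (h n) ^ 2 := by
    intro n
    rw [hB0Ps]
    have e : n + 1 - 1 = n := by omega
    rw [e]
    rcases n with _ | s
    · simp only [hB0PP, Nat.zero_sub, hA0, eq_self_iff_true, if_true]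
      norm_num
    · have h1 : ¬ (s + 1 + 1 = s + 1) := by omega
      have h2 : ¬ (s + 1 + 1 = s + 1 - 1) := by omega
      have h3 : ¬ (s + 1 = s + 1 - 1) := by omega
      simp only [hB0PP, h1, h2, h3, eq_self_iff_true, if_true, if_false]
      ring
  have hfar : ∀ n m, n + 2 ≤ m → B0 (Pstar n) (Pstar m) = 0 := by
    intro n m hge
    rw [hB0Ps]
    have h1 : ¬ (n = m) := by omega
    have h2 : ¬ (n = m - 1) := by omega
    have h3 : ¬ (n - 1 = m) := by omega
    have h4 : ¬ (n - 1 = m - 1) := by omega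
    simp only [hB0PP, h1, h2, h3, h4, if_false]
    ring
  have hJ : ∀ n m, Jstar n m = B0 (Pstar n) (Pstar m) / (hstar n * hstar m) := by
    intro n m
    rw [hJstar, (hint _ _).1]
  have hdiagsum : ∀ n, (∑ k ∈ Finset.range (max n n + 1), L n k * L n k) = Jstar n n := by
    intro n
    rw [max_self, hJ, hdiag]
    rcases n with _ | s
    · simp only [zero_add, Finset.sum_range_one, hL, if_pos rfl, eq_self_iff_true, if_true]
      rw [hA0]
      field_simp
      ring
    · have key := Finset.sum_eq_add_of_mem (s := Finset.range (s + 1 + 1))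
        (f := fun k => L (s + 1) k * L (s + 1) k) s (s + 1)
        (Finset.mem_range.mpr (by omega)) (Finset.mem_range.mpr (by omega)) (by omega) ?_
      · rw [key]
        simp only [hL]
        have h1 : ¬ (s = s + 1) := by omega
        have h2 : s + 1 - 1 = s := by omega
        simp only [h1, eq_self_iff_true, if_true, if_false, h2]
        field_simp
        ring
      · intro c _ hc
        show L (s + 1) c * L (s + 1) c = 0
        rw [hL]
        have h1 : ¬ (c = s + 1) := hc.2
        have h2 : ¬ (c + 1 = s + 1) := by omega
        simp [h1, h2, hc.1]
  have hsum : ∀ n m, n ≤ m →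
      (∑ k ∈ Finset.range (max n m + 1), L n k * L m k) = Jstar n m := by
    intro n m hle
    rcases (show m = n ∨ m = n + 1 ∨ n + 2 ≤ m by omega) with rfl | rfl | hge
    · exact hdiagsum _
    · -- superdiagonal case
      have hmax : max n (n + 1) = n + 1 := by omega
      rw [hmax, hJ, hB0symm, hoff]
      rw [Finset.sum_eq_single_of_mem n (Finset.mem_range.mpr (by omega)) ?_]
      · simp only [hL]
        have h1 : ¬ (n = n + 1) := by omega
        have h2 : n + 1 - 1 = n := by omega
        simp only [h1, eq_self_iff_true, if_true, if_false, h2]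
        field_simp
      · intro b _ hb
        rcases eq_or_ne (b + 1) n with hb1 | hb1
        · have : L (n + 1) b = 0 := by
            rw [hL, if_neg (by omega), if_neg (by omega)]
          rw [this, mul_zero]
        · have : L n b = 0 := by
            rw [hL, if_neg hb, if_neg hb1]
          rw [this, zero_mul]
    · -- far case
      rw [hJ, hfar n m hge, zero_div]
      apply Finset.sum_eq_zero
      intro k _
      rcases eq_or_ne k m with rfl | h1
      · have : L n k = 0 := by
          rw [hL, if_neg (by omega), if_neg (by omega)]
        rw [this, zero_mul]
      rcases eq_or_ne (k + 1) m with h2 | h2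
      · have : L n k = 0 := by
          rw [hL, if_neg (by omega), if_neg (by omega)]
        rw [this, zero_mul]
      · have : L m k = 0 := by
          rw [hL, if_neg h1, if_neg h2]
        rw [this, mul_zero]
  refine ⟨?_, ?_, ?_⟩
  · intro n m
    rcases le_total n m with hle | hle
    · exact (hsum n m hle).symm
    · calc Jstar n m = Jstar m n := by
            rw [hJ, hJ, hB0symm (Pstar n), mul_comm (hstar n)]
        _ = ∑ k ∈ Finset.range (max m n + 1), L m k * L n k := (hsum m n hle).symm
        _ = ∑ k ∈ Finset.range (max n m + 1), L n k * L m k := by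
            rw [max_comm]
            exact Finset.sum_congr rfl fun k _ => mul_comm _ _
  · intro n
    rw [hJ, hdiag]
    field_simp
  · intro n
    rw [hJ, hoff]
    rw [mul_comm (hstar (n + 1))]
end

section
/- With the double Geronimus transformation [·,·]₂ positive definite and Pₙ** = Pₙ + BₙPₙ₋₁ + CₙPₙ₋₂ its monic orthogonal polynomials with norms (hₙ**)² = [Pₙ**,Pₙ**]₂, the symmetric pentadiagonal matrix J** = ([t²P̂ₙ**, P̂ₘ**]₂) (P̂ₙ** = Pₙ**/hₙ**) admits the Cholesky factorization J** = LLᵀ, where L is lower triangular with three nonzero diagonals: Lₙₙ = hₙ/hₙ**, Lₙ₊₁,ₙ = Bₙ₊₁hₙ/hₙ₊₁**, Lₙ₊₂,ₙ = Cₙ₊₂hₙ/hₙ₊₂**, and moreover hₙ₊₂/hₙ₊₂** = hₙ₊₂/(√(Cₙ₊₂) hₙ). -/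
open Polynomial

/-- The symmetric pentadiagonal matrix `J**` of the double Geronimus
transform in the orthonormal basis admits the Cholesky factorization `J** = L Lᵀ`
with `L` having three nonzero diagonals, and `hₙ₊₂/hₙ₊₂** = hₙ₊₂/(√Cₙ₊₂ hₙ)`. -/
theorem double_geronimus_pentadiagonal_cholesky
    (B0 B2 : LinearMap.BilinForm ℝ (Polynomial ℝ))
    (hB0symm : ∀ f g, B0 f g = B0 g f)
    (hB0pos : ∀ f : Polynomial ℝ, f ≠ 0 → 0 < B0 f f)
    (hB2symm : ∀ f g, B2 f g = B2 g f)
    (hB2pos : ∀ f : Polynomial ℝ, f ≠ 0 → 0 < B2 f f)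
    (hint : ∀ f g : Polynomial ℝ, B2 (X ^ 2 * f) g = B0 f g ∧ B2 f (X ^ 2 * g) = B0 f g)
    (P : ℕ → Polynomial ℝ)
    (hmonic : ∀ n, (P n).Monic) (hdeg : ∀ n, (P n).natDegree = n)
    (horth : ∀ n m, n ≠ m → B0 (P n) (P m) = 0)
    (B C : ℕ → ℝ) (hB0' : B 0 = 0) (hC0 : C 0 = 0) (hC1 : C 1 = 0)
    (Pss : ℕ → Polynomial ℝ)
    (hPss0 : Pss 0 = P 0)
    (hPss1 : Pss 1 = P 1 + B 1 • P 0)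
    (hPss : ∀ n, 2 ≤ n → Pss n = P n + B n • P (n - 1) + C n • P (n - 2))
    (hPssorth : ∀ n, ∀ k < n, B2 (Pss n) (X ^ k) = 0)
    (h : ℕ → ℝ) (hh : ∀ n, (h n) ^ 2 = B0 (P n) (P n)) (hhpos : ∀ n, 0 < h n)
    (hss : ℕ → ℝ) (hhss : ∀ n, (hss n) ^ 2 = B2 (Pss n) (Pss n))
    (hhsspos : ∀ n, 0 < hss n)
    (Jss : ℕ → ℕ → ℝ)
    (hJss : ∀ n m, Jss n m = B2 (X ^ 2 * Pss n) (Pss m) / (hss n * hss m))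
    (L : ℕ → ℕ → ℝ)
    (hL : ∀ n m, L n m =
      if m = n then h n / hss n
      else if m + 1 = n then B n * h (n - 1) / hss n
      else if m + 2 = n then C n * h (n - 2) / hss n else 0) :
    (∀ n m, Jss n m = ∑ k ∈ Finset.range (max n m + 1), L n k * L m k) ∧
    (∀ n : ℕ, h (n + 2) / hss (n + 2) = h (n + 2) / (Real.sqrt (C (n + 2)) * h n)) := by
  classical
  set a : ℕ → ℕ → ℝ := fun n k =>
    if k = n then 1 else if k + 1 = n then B n else if k + 2 = n then C n else 0 with ha
  have haz : ∀ n k, n < k → a n k = 0 := by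
    intro n k hk
    simp only [ha]
    rw [if_neg (by omega), if_neg (by omega), if_neg (by omega)]
  -- uniform three-term expansion of Pss in the P basis
  have hPssAll : ∀ n, Pss n = ∑ k ∈ Finset.range (n + 1), a n k • P k := by
    intro n
    match n with
    | 0 =>
      rw [hPss0, Finset.sum_range_one]
      simp [ha]
    | 1 =>
      rw [hPss1, Finset.sum_range_succ, Finset.sum_range_one]
      simp only [ha]
      norm_num
      abel
    | (k + 2) =>
      have e1 : k + 2 - 1 = k + 1 := by omega
      have e2 : k + 2 - 2 = k := by omega
      rw [hPss (k + 2) (by omega), e1, e2,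
        Finset.sum_range_succ, Finset.sum_range_succ, Finset.sum_range_succ]
      have z0 : ∑ i ∈ Finset.range k, a (k + 2) i • P i = 0 := by
        refine Finset.sum_eq_zero fun i hi => ?_
        have hik : i < k := Finset.mem_range.mp hi
        have : a (k + 2) i = 0 := by
          simp only [ha]
          rw [if_neg (by omega), if_neg (by omega), if_neg (by omega)]
        rw [this, zero_smul]
      have vk : a (k + 2) k = C (k + 2) := by
        simp only [ha]
        rw [if_neg (by omega), if_neg (by omega)]
        simp
      have vk1 : a (k + 2) (k + 1) = B (k + 2) := by
        simp only [ha]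
        rw [if_neg (by omega)]
        simp
      have vk2 : a (k + 2) (k + 2) = 1 := by
        simp [ha]
      rw [z0, vk, vk1, vk2, one_smul, zero_add]
      abel
  have horth2 : ∀ i j, i ≠ j → B0 (P i) (P j) = 0 := horth
  -- key: B0 (Pss n) (Pss m) as a diagonal sum
  have key1 : ∀ n m, B0 (Pss n) (Pss m) =
      ∑ k ∈ Finset.range (max n m + 1), a n k * a m k * h k ^ 2 := by
    intro n m
    have hsub : ∀ p, p ≤ max n m →
        Pss p = ∑ k ∈ Finset.range (max n m + 1), a p k • P k := by
      intro p hp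
      rw [hPssAll p]
      apply Finset.sum_subset
      · intro x hx
        simp only [Finset.mem_range] at hx ⊢
        omega
      · intro x hx hx'
        simp only [Finset.mem_range] at hx hx'
        rw [haz p x (by omega), zero_smul]
    rw [hsub n (le_max_left _ _), hsub m (le_max_right _ _)]
    simp only [map_sum, LinearMap.sum_apply, map_smul, LinearMap.smul_apply, smul_eq_mul]
    refine Finset.sum_congr rfl fun i hi => ?_
    rw [Finset.sum_eq_single i
      (fun j _ hji => by rw [horth2 j i hji]; ring)
      (fun hni => absurd hi hni)]
    rw [← hh i]; ring
  -- L in terms of a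
  have hLa : ∀ n k, L n k = a n k * h k / hss n := by
    intro n k
    rw [hL]
    simp only [ha]
    split_ifs with h1 h2 h3
    · subst h1; rw [one_mul]
    · have : n - 1 = k := by omega
      rw [this]
    · have : n - 2 = k := by omega
      rw [this]
    · rw [zero_mul, zero_div]
  constructor
  · -- Cholesky factorization
    intro n m
    rw [hJss, (hint (Pss n) (Pss m)).1, key1, Finset.sum_div]
    refine Finset.sum_congr rfl fun k hk => ?_
    rw [hLa n k, hLa m k]
    ring
  · -- norm identity
    intro n
    -- degree facts
    have hdegP : ∀ k, (P k).degree = (k : WithBot ℕ) := fun k => by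
      rw [Polynomial.degree_eq_natDegree (hmonic k).ne_zero, hdeg k]
    have hPssM : ∀ n, (Pss n).Monic ∧ (Pss n).degree = (n : WithBot ℕ) := by
      intro n
      match n with
      | 0 => rw [hPss0]; exact ⟨hmonic 0, hdegP 0⟩
      | 1 =>
        rw [hPss1]
        have hlt : (B 1 • P 0).degree < (P 1).degree := by
          refine lt_of_le_of_lt (Polynomial.degree_smul_le _ _) ?_
          rw [hdegP 0, hdegP 1]
          exact_mod_cast Nat.zero_lt_one
        exact ⟨(hmonic 1).add_of_left hlt,
          by rw [Polynomial.degree_add_eq_left_of_degree_lt hlt, hdegP 1]⟩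
      | (k + 2) =>
        have e1 : k + 2 - 1 = k + 1 := by omega
        have e2 : k + 2 - 2 = k := by omega
        rw [hPss (k + 2) (by omega), e1, e2, add_assoc]
        have hlt : (B (k + 2) • P (k + 1) + C (k + 2) • P k).degree < (P (k + 2)).degree := by
          refine lt_of_le_of_lt (Polynomial.degree_add_le _ _) ?_
          rw [max_lt_iff]
          constructor
          · refine lt_of_le_of_lt (Polynomial.degree_smul_le _ _) ?_
            rw [hdegP (k + 1), hdegP (k + 2)]
            exact_mod_cast (by omega : k + 1 < k + 2)
          · refine lt_of_le_of_lt (Polynomial.degree_smul_le _ _) ?_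
            rw [hdegP k, hdegP (k + 2)]
            exact_mod_cast (by omega : k < k + 2)
        exact ⟨(hmonic (k + 2)).add_of_left hlt,
          by rw [Polynomial.degree_add_eq_left_of_degree_lt hlt, hdegP (k + 2)]⟩
    obtain ⟨hM2, hd2⟩ := hPssM (n + 2)
    obtain ⟨hMn, hdn⟩ := hPssM n
    -- B2 against low-degree polynomials vanishes
    have hlow : ∀ N (q : Polynomial ℝ), q.natDegree < N → B2 (Pss N) q = 0 := by
      intro N q hq
      rw [Polynomial.as_sum_range' q N hq, map_sum]
      refine Finset.sum_eq_zero fun i hi => ?_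
      rw [← Polynomial.smul_X_eq_monomial, map_smul, smul_eq_mul,
        hPssorth N i (Finset.mem_range.mp hi), mul_zero]
    set R : Polynomial ℝ := X ^ 2 * Pss n - Pss (n + 2) with hR
    have hMmul : (X ^ 2 * Pss n).Monic := (Polynomial.monic_X_pow 2).mul hMn
    have hdmul : (X ^ 2 * Pss n).degree = ((n + 2 : ℕ) : WithBot ℕ) := by
      rw [Polynomial.degree_mul, Polynomial.degree_X_pow, hdn]
      exact_mod_cast (by omega : 2 + n = n + 2)
    have hBR : B2 (Pss (n + 2)) R = 0 := by
      by_cases h0 : R = 0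
      · rw [h0, map_zero]
      · apply hlow
        have hdlt : R.degree < ((n + 2 : ℕ) : WithBot ℕ) := by
          have := Polynomial.degree_sub_lt (hdmul.trans hd2.symm) hMmul.ne_zero
            (by rw [hMmul.leadingCoeff, hM2.leadingCoeff])
          rw [hR]
          calc (X ^ 2 * Pss n - Pss (n + 2)).degree < (X ^ 2 * Pss n).degree := this
            _ = _ := hdmul
        exact (Polynomial.natDegree_lt_iff_degree_lt h0).mpr hdlt
    have hsq : hss (n + 2) ^ 2 = C (n + 2) * h n ^ 2 := by
      have e1 : Pss (n + 2) = X ^ 2 * Pss n - R := by rw [hR]; ring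
      have hval : B2 (Pss (n + 2)) (Pss (n + 2)) = B0 (Pss (n + 2)) (Pss n) := by
        have h2 : B2 (Pss (n + 2)) (X ^ 2 * Pss n - R) = B2 (Pss (n + 2)) (Pss (n + 2)) := by
          rw [← e1]
        rw [← h2, map_sub, hBR, sub_zero, (hint (Pss (n + 2)) (Pss n)).2]
      rw [hhss, hval, key1]
      have hmax : max (n + 2) n = n + 2 := by omega
      rw [hmax, Finset.sum_range_succ, Finset.sum_range_succ, Finset.sum_range_succ]
      have z2 : a n (n + 2) = 0 := haz n (n + 2) (by omega)
      have z1 : a n (n + 1) = 0 := haz n (n + 1) (by omega)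
      have v1 : a (n + 2) n = C (n + 2) := by
        simp only [ha]
        rw [if_neg (by omega), if_neg (by omega)]
        simp
      have v2 : a n n = 1 := by simp [ha]
      have z0 : ∑ k ∈ Finset.range n, a (n + 2) k * a n k * h k ^ 2 = 0 := by
        refine Finset.sum_eq_zero fun k hk => ?_
        have hkn : k < n := Finset.mem_range.mp hk
        have : a (n + 2) k = 0 := by
          simp only [ha]
          rw [if_neg (by omega), if_neg (by omega), if_neg (by omega)]
        rw [this, zero_mul, zero_mul]
      rw [z0, z1, z2, v1, v2]
      ring
    have hCpos : 0 < C (n + 2) := by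
      nlinarith [hhsspos (n + 2), hhpos n, sq_nonneg (h n)]
    have hssval : hss (n + 2) = Real.sqrt (C (n + 2)) * h n := by
      rw [← Real.sqrt_sq (hhsspos (n + 2)).le, hsq, Real.sqrt_mul hCpos.le,
        Real.sqrt_sq (hhpos n).le]
    rw [hssval]
end
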